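/- Let G be a group such that G ≀ ℤ embeds into G, where G ≀ ℤ = G^{(ℤ)} ⋊ ℤ is the restricted regular wreath product. Define iterated wreath products by W₀ = ℤ and W_{n+1} = W_n ≀ ℤ. Then for every n, the group W_n embeds into G ≀ ℤ, and hence into G. -/

import Mathlib

open Function

/-- The group `G^{(Y)}` of finitely supported functions `Y → G` under pointwise
multiplication, as a subgroup of `Y → G`. -/
def RestrictedPi (Y : Type) (G : Type) [Group G] : Subgroup (Y → G) where
  carrier := {f | (mulSupport f).Finite}
  one_mem' := by
    show (mulSupport (1 : Y → G)).Finite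
    simp
  mul_mem' := fun {a b} ha hb => Set.Finite.subset (ha.union hb) (mulSupport_mul a b)
  inv_mem' := fun {a} ha => by
    show (mulSupport (a⁻¹ : Y → G)).Finite
    refine Set.Finite.subset ha fun x hx => ?_
    simp only [mem_mulSupport, Pi.inv_apply, ne_eq, inv_eq_one] at hx ⊢
    exact hx

/-- The shift automorphism `f ↦ (y ↦ f (y + c))` of `G^{(ℤ)}`. -/
def shiftEquiv (G : Type) [Group G] (c : ℤ) : RestrictedPi ℤ G ≃* RestrictedPi ℤ G where
  toFun f := ⟨fun y => (f : ℤ → G) (y + c), by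
    show (mulSupport fun y => (f : ℤ → G) (y + c)).Finite
    have heq : (fun y => (f : ℤ → G) (y + c)) = (f : ℤ → G) ∘ (fun y => y + c) := rfl
    rw [heq, mulSupport_comp_eq_preimage]
    exact Set.Finite.preimage ((add_left_injective c).injOn) f.2⟩
  invFun f := ⟨fun y => (f : ℤ → G) (y - c), by
    show (mulSupport fun y => (f : ℤ → G) (y - c)).Finite
    have heq : (fun y => (f : ℤ → G) (y - c)) = (f : ℤ → G) ∘ (fun y => y - c) := rfl
    rw [heq, mulSupport_comp_eq_preimage]
    exact Set.Finite.preimage ((sub_left_injective (G := ℤ)).injOn) f.2⟩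
  left_inv f := Subtype.ext (funext fun y => by simp)
  right_inv f := Subtype.ext (funext fun y => by simp)
  map_mul' f g := rfl

/-- The action of `ℤ` on `G^{(ℤ)}` by shifting the argument. -/
def shiftHom (G : Type) [Group G] : Multiplicative ℤ →* MulAut (RestrictedPi ℤ G) where
  toFun c := shiftEquiv G c.toAdd
  map_one' := MulEquiv.ext fun f => Subtype.ext (funext fun y => by
    simp [shiftEquiv])
  map_mul' a b := MulEquiv.ext fun f => Subtype.ext (funext fun y => by
    simp [shiftEquiv, add_assoc])

/-- The restricted regular wreath product `G ≀ ℤ = G^{(ℤ)} ⋊ ℤ`, with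
multiplication `(f₁, h₁)(f₂, h₂) = (y ↦ f₁ y * f₂ (y + h₁), h₁ + h₂)`. -/
abbrev WrZ (G : Type) [Group G] : Type :=
  SemidirectProduct (RestrictedPi ℤ G) (Multiplicative ℤ) (shiftHom G)

/-- The iterated wreath products `W₀ = ℤ`, `W_{n+1} = W_n ≀ ℤ`, bundled with their
group structures. -/
def WAux : ℕ → (T : Type) × Group T
  | 0 => ⟨Multiplicative ℤ, inferInstance⟩
  | n + 1 =>
    letI := (WAux n).2
    ⟨WrZ (WAux n).1, inferInstance⟩

instance instGroupWAux (n : ℕ) : Group (WAux n).1 := (WAux n).2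

theorem SemidirectProduct.map_injective {N₁ G₁ N₂ G₂ : Type*} [Group N₁] [Group G₁] [Group N₂]
    [Group G₂] {φ₁ : G₁ →* MulAut N₁} {φ₂ : G₂ →* MulAut N₂} {fn : N₁ →* N₂} {fg : G₁ →* G₂}
    {h : ∀ g : G₁, fn.comp (φ₁ g).toMonoidHom = (φ₂ (fg g)).toMonoidHom.comp fn}
    (hfn : Injective fn) (hfg : Injective fg) : Injective (map fn fg h) :=
  fun _ _ hxy => SemidirectProduct.ext (hfn congr(($hxy).left)) (hfg congr(($hxy).right))

def RestrictedPi.map {Y H G : Type} [Group H] [Group G] (φ : H →* G) :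
    RestrictedPi Y H →* RestrictedPi Y G :=
  ((MonoidHom.compLeft φ Y).comp (RestrictedPi Y H).subtype).codRestrict _ fun f =>
    f.2.subset (mulSupport_comp_subset (map_one φ) _)

theorem RestrictedPi.map_injective {Y H G : Type} [Group H] [Group G] {φ : H →* G}
    (hφ : Injective φ) : Injective (RestrictedPi.map (Y := Y) φ) :=
  fun _ _ hfg => Subtype.ext (hφ.comp_left congr(Subtype.val $hfg))

def WrZ.map {H G : Type} [Group H] [Group G] (φ : H →* G) : WrZ H →* WrZ G :=
  SemidirectProduct.map (RestrictedPi.map φ) (MonoidHom.id _) fun _ => rfl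

theorem WrZ.map_injective {H G : Type} [Group H] [Group G] {φ : H →* G}
    (hφ : Injective φ) : Injective (WrZ.map φ) :=
  SemidirectProduct.map_injective (RestrictedPi.map_injective hφ) injective_id

/-- If `G ≀ ℤ` embeds into `G`, then every iterated wreath product
`W_n = ℤ ≀ ⋯ ≀ ℤ` embeds into `G ≀ ℤ`, and hence into `G`. -/
theorem stmt_12 (G : Type) [Group G]
    (h : ∃ φ : WrZ G →* G, Function.Injective φ) (n : ℕ) :
    (∃ ψ : (WAux n).1 →* WrZ G, Function.Injective ψ) ∧
    (∃ ψ : (WAux n).1 →* G, Function.Injective ψ) := by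
  obtain ⟨φ, hφ⟩ := h
  suffices hW : ∃ ψ : (WAux n).1 →* WrZ G, Injective ψ by
    obtain ⟨ψ, hψ⟩ := hW
    exact ⟨⟨ψ, hψ⟩, ⟨φ.comp ψ, hφ.comp hψ⟩⟩
  induction n with
  | zero => exact ⟨SemidirectProduct.inr, SemidirectProduct.inr_injective⟩
  | succ n ih =>
    -- `W_n ↪ G ≀ ℤ ↪ G`, and `- ≀ ℤ` preserves embeddings.
    obtain ⟨ψ, hψ⟩ := ih
    exact ⟨WrZ.map (φ.comp ψ), WrZ.map_injective (hφ.comp hψ)⟩
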